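/- For each fixed a ∈ G, the map F : ℝ → G defined by F(α) := φ_α(a), i.e. F(α) = (2/(1−α))·(exp_G(((1−α)/2)·a) − 1) for α ≠ 1 and F(1) = a, is of class C^∞ (infinitely differentiable as a map from ℝ to the Banach space G). -/

import Mathlib

open MeasureTheory BoundedContinuousFunction

noncomputable section

namespace Paper

variable {Y : Type*} [TopologicalSpace Y]

/-- Pointwise exponential map on `G = C_b(B;ℝ)`: `expG a x = exp (a x)`. -/
def expG (a : BoundedContinuousFunction Y ℝ) : BoundedContinuousFunction Y ℝ :=
  BoundedContinuousFunction.ofNormedAddCommGroup (fun x => Real.exp (a x))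
    (Real.continuous_exp.comp a.continuous) (Real.exp ‖a‖)
    (fun x => by
      rw [Real.norm_eq_abs, abs_of_pos (Real.exp_pos _)]
      exact Real.exp_le_exp.2 ((le_abs_self _).trans (a.norm_coe_le_norm x)))

@[simp] lemma expG_apply (a : BoundedContinuousFunction Y ℝ) (x : Y) :
    expG a x = Real.exp (a x) := rfl

/-- Amari's α-embedding chart `φ_α`. -/
def phi (α : ℝ) (a : BoundedContinuousFunction Y ℝ) : BoundedContinuousFunction Y ℝ :=
  if α = 1 then a else (2 / (1 - α)) • (expG (((1 - α) / 2) • a) - 1)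

variable [MeasurableSpace Y]

/-- The α-divergence `D^α(a‖b)` (for `α ≠ ±1`) between the finite measures with
`μ`-densities `exp_G(a)` and `exp_G(b)`. -/
def Dalpha (μ : Measure Y) (α : ℝ) (a b : BoundedContinuousFunction Y ℝ) : ℝ :=
  (2 / (1 + α)) * ∫ x, (phi (-1) a x - phi α a x) ∂μ
    + (2 / (1 - α)) * ∫ x, (phi (-1) b x - phi (-α) b x) ∂μ
    - ∫ x, phi α a x * phi (-α) b x ∂μ

/-- The extended Kullback–Leibler divergence `D^{−1}(a‖b)`. -/
def DKL (μ : Measure Y) (a b : BoundedContinuousFunction Y ℝ) : ℝ :=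
  ∫ x, (expG b x - expG a x) ∂μ + ∫ x, expG a x * (a x - b x) ∂μ

end Paper

/-! With `t = (1 - α) / 2`, `φ_α(a)` is the difference quotient `t⁻¹ • (exp (t • a) - exp 0)` of
the entire curve `t ↦ exp (t • a)` in the Banach algebra `G`, extended at `t = 0` by its
derivative `a`, i.e. a `dslope`. The `dslope` of an analytic function is again analytic, hence
smooth. -/

open NormedSpace

theorem AnalyticAt.dslope {𝕜 E : Type*} [NontriviallyNormedField 𝕜] [NormedAddCommGroup E]
    [NormedSpace 𝕜 E] {f : 𝕜 → E} {a b : 𝕜} (ha : AnalyticAt 𝕜 f a) (hb : AnalyticAt 𝕜 f b) :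
    AnalyticAt 𝕜 (dslope f a) b := by
  rcases eq_or_ne b a with rfl | hba
  · obtain ⟨p, hp⟩ := ha
    exact ⟨_, hp.has_fpower_series_dslope_fslope⟩
  · refine AnalyticAt.congr ?_ (dslope_eventuallyEq_slope_of_ne f hba).symm
    rw [funext (slope_def_module f a)]
    have hsub : AnalyticAt 𝕜 (fun z => z - a) b := analyticAt_id.sub analyticAt_const
    exact (hsub.inv (sub_ne_zero.2 hba)).smul (hb.sub analyticAt_const)

namespace Paper

variable {Y : Type*} [TopologicalSpace Y]

theorem expG_eq_exp (a : Y →ᵇ ℝ) : expG a = exp a := by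
  ext x
  rw [expG_apply, Real.exp_eq_exp_ℝ]
  exact (map_exp ((ContinuousMap.evalAlgHom ℝ ℝ x).comp (toContinuousMapₐ ℝ))
    (continuous_eval_const x) a).symm

theorem phi_eq_dslope (α : ℝ) (a : Y →ᵇ ℝ) :
    phi α a = dslope (fun t : ℝ => exp (t • a)) 0 ((1 - α) / 2) := by
  by_cases hα : α = 1
  · subst hα
    rw [phi, if_pos rfl, sub_self, zero_div, dslope_same,
      (hasDerivAt_exp_smul_const a (0 : ℝ)).deriv, zero_smul, exp_zero, one_mul]
  · have ht : (1 - α) / 2 ≠ 0 := div_ne_zero (sub_ne_zero.2 (Ne.symm hα)) two_ne_zero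
    rw [phi, if_neg hα, dslope_of_ne _ ht, slope_def_module, sub_zero, zero_smul, exp_zero,
      inv_div, expG_eq_exp]

theorem contDiff_phi (a : Y →ᵇ ℝ) {n : WithTop ℕ∞} : ContDiff ℝ n (fun α : ℝ => phi α a) := by
  simp only [phi_eq_dslope]
  have hexp (t : ℝ) : AnalyticAt ℝ (fun s : ℝ => exp (s • a)) t :=
    (exp_analytic _).fun_comp (f := fun s : ℝ => s • a) (analyticAt_id.smul analyticAt_const)
  refine AnalyticOnNhd.contDiff fun α _ => ?_
  exact ((hexp 0).dslope (hexp _)).comp ((analyticAt_const.sub analyticAt_id).div_const)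

end Paper

theorem statement_19_general {X : Type*} [NormedAddCommGroup X]
    (B : Set X)
    (a : BoundedContinuousFunction B ℝ) :
    ContDiff ℝ (⊤ : ℕ∞) (fun α : ℝ => Paper.phi α a) :=
  Paper.contDiff_phi a

/-- for each fixed `a ∈ G`, the map `ℝ ∋ α ↦ φ_α(a) ∈ G` is of class
`C^∞`. -/
theorem statement_19 {X : Type*} [NormedAddCommGroup X] [NormedSpace ℝ X]
    (B : Set X) (hB : IsOpen B) (hBne : B.Nonempty)
    (a : BoundedContinuousFunction B ℝ) :
    ContDiff ℝ (⊤ : ℕ∞) (fun α : ℝ => Paper.phi α a) :=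
  statement_19_general B a
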